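/- Let G be a bipartite graph with parts R and B, and construct H as follows: add a clique A = {a_1,…,a_p} adjacent to all of R; replace each vertex b^j of B by a clique {b^j_1,…,b^j_p} where each b^j_i is adjacent to exactly the G-neighbors (in R) of b^j; attach a pendant vertex to every vertex of A and of the new cliques. Assume every vertex of R has a neighbor in B, every vertex of B has a neighbor in R, |B| = t ≥ p, and k ≥ p. Then G has a set R* ⊆ R of size at most k with N_G(R*) = B if and only if H has a vertex cover of size at most k + p(t+1) inducing a p-edge-connected subgraph. -/

import Mathlib

/-- `C` is a vertex cover of `G`: every edge has an endpoint in `C`. -/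
def IsVertexCover {V : Type*} (G : SimpleGraph V) (C : Set V) : Prop :=
  ∀ ⦃u v : V⦄, G.Adj u v → u ∈ C ∨ v ∈ C

/-- A graph is `p`-edge-connected if it has at least two vertices and removing
any set of fewer than `p` edges leaves it connected. -/
def PEdgeConnected {V : Type*} (G : SimpleGraph V) (p : ℕ) : Prop :=
  (∃ a b : V, a ≠ b) ∧
    ∀ Y : Set (Sym2 V), Y.encard < (p : ℕ∞) → (G.deleteEdges Y).Connected

/-- The underlying symmetric relation of the graph `H` built from the bipartite
graph `(R, B, Adj)`: a clique `A = Fin p` joined to all of `R`; each `b ∈ B`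
replaced by a clique `{b} × Fin p` whose vertices are adjacent to exactly the
`Adj`-neighbors of `b` in `R`; and a pendant vertex attached to every vertex of
`A` and of the `B`-cliques.  The vertex set is
`(R ⊕ A) ⊕ ((B × Fin p) ⊕ pendants)`. -/
def redRel (R B : Type*) (p : ℕ) (Adj : R → B → Prop) :
    (R ⊕ Fin p) ⊕ ((B × Fin p) ⊕ (Fin p ⊕ B × Fin p)) →
      (R ⊕ Fin p) ⊕ ((B × Fin p) ⊕ (Fin p ⊕ B × Fin p)) → Prop
  | Sum.inl (Sum.inr _), Sum.inl (Sum.inr _) => True        -- the clique `A`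
  | Sum.inl (Sum.inr _), Sum.inl (Sum.inl _) => True        -- `A` joined to `R`
  | Sum.inl (Sum.inl u), Sum.inr (Sum.inl bi) => Adj u bi.1 -- `R` to `B`-cliques
  | Sum.inr (Sum.inl bi), Sum.inr (Sum.inl bi') => bi.1 = bi'.1 -- `B`-cliques
  | Sum.inl (Sum.inr a), Sum.inr (Sum.inr (Sum.inl a')) => a = a' -- pendants of `A`
  | Sum.inr (Sum.inl bi), Sum.inr (Sum.inr (Sum.inr bi')) => bi = bi' -- pendants of `B`-cliques
  | _, _ => False

/-!
Forward direction: if `Rs` dominates `B`, take `C = Rs ∪ A ∪ ⋃ⱼ {b^j_1, …, b^j_p}`. It covers every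
edge, since the unchosen red vertices and the pendants are pairwise non-adjacent. Fix `r₀ ∈ Rs`.
Each `a_i` is adjacent to `r₀` and has the other `p - 1` vertices of `A` as common neighbours with
it; each `b^j_i` is adjacent to a dominating `r ∈ Rs` and has the other `p - 1` vertices of its
clique as common neighbours with it; each `r ∈ Rs` has the `p` neighbours `A`. In each case this
gives `p` edge-disjoint routes, so deleting fewer than `p` edges separates no vertex of `C` from
`r₀`.

Backward direction: in a `p`-edge-connected graph with `p ≥ 2` no vertex has at most one neighbour,
so `C` contains no pendant; being a cover it then contains `A` and every clique `b^j`, which leaves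
at most `k` red vertices in `C`. A clique `b^j` whose red neighbours all lie outside `C` would be a
connected component of `H[C]`, so the red vertices of `C` dominate `B`.
-/

open SimpleGraph hiding IsVertexCover
open Function

theorem card_le_encard_of_pairwise_disjoint {α ι : Type*} [Fintype ι] {Y : Set α}
    {S : ι → Set α} (hS : Pairwise (Disjoint on S)) (hY : ∀ i, (S i ∩ Y).Nonempty) :
    (Fintype.card ι : ℕ∞) ≤ Y.encard := by
  choose f hf using hY
  have hf_inj : Injective f := fun i j hij =>
    by_contra fun hne => (hS hne).ne_of_mem (hf i).1 (hij ▸ (hf j).1) rfl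
  calc (Fintype.card ι : ℕ∞) = ENat.card ι := ENat.card_eq_coe_fintype_card.symm
    _ ≤ (Set.range f).encard := hf_inj.encard_range
    _ ≤ Y.encard := Set.encard_mono (Set.range_subset_iff.2 fun i => (hf i).2)

theorem pEdgeConnected_iff {V : Type*} {G : SimpleGraph V} {p : ℕ} :
    PEdgeConnected G p ↔ Nontrivial V ∧ G.IsEdgeConnected p := by
  refine ⟨fun ⟨hne, h⟩ => ⟨nontrivial_iff.2 hne, fun u v Y hY => (h Y hY).preconnected u v⟩,
    fun ⟨hne, h⟩ => ⟨exists_pair_ne V, fun Y hY => ?_⟩⟩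
  have : Nonempty V := hne.to_nonempty
  exact ⟨fun u v => h u v hY⟩

namespace SimpleGraph

variable {V : Type*} {G : SimpleGraph V} {k : ℕ} {u v : V} {ι : Type*} [Fintype ι]

theorem isEdgeReachable_of_pairwise_disjoint_edges (w : ι → G.Walk u v)
    (hw : Pairwise (Disjoint on fun i => {e | e ∈ (w i).edges})) (hk : k ≤ Fintype.card ι) :
    G.IsEdgeReachable k u v := by
  intro Y hY
  by_contra hsep
  have hmeet : ∀ i, ({e | e ∈ (w i).edges} ∩ Y).Nonempty := fun i => by
    by_contra hi
    exact hsep ⟨(w i).toDeleteEdges Y fun e he heY => hi ⟨e, he, heY⟩⟩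
  have := card_le_encard_of_pairwise_disjoint hw hmeet
  exact (hY.trans_le ((Nat.cast_le.2 hk).trans this)).false

theorem isEdgeReachable_of_forall_adj {n : ι → V} (hn : Injective n) (hadj : ∀ i, G.Adj u (n i))
    (hreach : ∀ i, G.IsEdgeReachable k (n i) v) (hk : k ≤ Fintype.card ι) :
    G.IsEdgeReachable k u v := by
  intro Y hY
  obtain ⟨i, hi⟩ : ∃ i, s(u, n i) ∉ Y := by
    by_contra! hall
    have hS : Pairwise (Disjoint on fun i => ({s(u, n i)} : Set (Sym2 V))) :=
      fun i j hij => Set.disjoint_singleton.2 fun h => hn.ne hij (Sym2.congr_right.1 h)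
    have := card_le_encard_of_pairwise_disjoint hS fun i => ⟨_, rfl, hall i⟩
    exact (hY.trans_le ((Nat.cast_le.2 hk).trans this)).false
  exact (deleteEdges_adj.2 ⟨hadj i, hi⟩).reachable.trans (hreach i hY)

theorem Adj.isEdgeReachable_of_commonNeighbors (huv : G.Adj u v) {m : ι → V} (hm : Injective m)
    (hu : ∀ j, G.Adj u (m j)) (hv : ∀ j, G.Adj (m j) v) (hk : k ≤ Fintype.card ι + 1) :
    G.IsEdgeReachable k u v := by
  refine isEdgeReachable_of_pairwise_disjoint_edges
    (fun o : Option ι => o.elim huv.toWalk fun j => Walk.cons (hu j) (hv j).toWalk) ?_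
    (by rwa [Fintype.card_option])
  have huv_ne := huv.ne
  have hu_ne := fun j => (hu j).ne
  have hv_ne := fun j => (hv j).ne
  rintro (_ | i) (_ | j) hij <;>
    simp only [onFun, Option.elim, Walk.edges_cons, Walk.edges_nil, List.mem_cons,
      List.not_mem_nil, or_false, Set.disjoint_left, Set.mem_ofPred_eq] <;>
    grind [Injective, Sym2.eq_iff]

theorem IsEdgeConnected.not_subsingleton_neighborSet [Finite V] [Nontrivial V]
    (h : G.IsEdgeConnected k) (hk : 2 ≤ k) (u : V) : ¬ (G.neighborSet u).Subsingleton := by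
  intro hu
  have := Fintype.ofFinite (G.neighborSet u)
  have hdeg := h.le_degree (u := u)
  rw [← card_neighborSet_eq_degree] at hdeg
  have := Fintype.card_le_one_iff_subsingleton.2 hu.coe_sort
  omega

end SimpleGraph

abbrev RedVertex (R B : Type*) (p : ℕ) : Type _ :=
  (R ⊕ Fin p) ⊕ ((B × Fin p) ⊕ (Fin p ⊕ B × Fin p))

abbrev redGraph (R B : Type*) (p : ℕ) (Adj : R → B → Prop) : SimpleGraph (RedVertex R B p) :=
  fromRel (redRel R B p Adj)

section Reduction

variable {R B : Type*} {p : ℕ} {Adj : R → B → Prop}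

theorem redGraph_adj_A_A {i j : Fin p} (h : i ≠ j) :
    (redGraph R B p Adj).Adj (Sum.inl (Sum.inr i)) (Sum.inl (Sum.inr j)) := by
  simp [redRel, h]

theorem redGraph_adj_A_R (i : Fin p) (r : R) :
    (redGraph R B p Adj).Adj (Sum.inl (Sum.inr i)) (Sum.inl (Sum.inl r)) := by
  simp [redRel]

theorem redGraph_adj_R_B {r : R} {b : B} (h : Adj r b) (i : Fin p) :
    (redGraph R B p Adj).Adj (Sum.inl (Sum.inl r)) (Sum.inr (Sum.inl (b, i))) := by
  simp [redRel, h]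

theorem redGraph_adj_B_B {b : B} {i j : Fin p} (h : i ≠ j) :
    (redGraph R B p Adj).Adj (Sum.inr (Sum.inl (b, i))) (Sum.inr (Sum.inl (b, j))) := by
  simp [redRel, h]

theorem redGraph_adj_A_pendant (i : Fin p) :
    (redGraph R B p Adj).Adj (Sum.inl (Sum.inr i)) (Sum.inr (Sum.inr (Sum.inl i))) := by
  simp [redRel]

theorem redGraph_adj_B_pendant (bi : B × Fin p) :
    (redGraph R B p Adj).Adj (Sum.inr (Sum.inl bi)) (Sum.inr (Sum.inr (Sum.inr bi))) := by
  simp [redRel]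

theorem eq_of_redGraph_adj_pendant {x : Fin p ⊕ B × Fin p} {y : RedVertex R B p}
    (h : (redGraph R B p Adj).Adj (Sum.inr (Sum.inr x)) y) :
    y = Sum.elim (fun i => Sum.inl (Sum.inr i)) (fun bi => Sum.inr (Sum.inl bi)) x := by
  rcases x with i | bi <;> rcases y with (_ | _) | (_ | _ | _) <;> grind [fromRel_adj, redRel]

theorem redGraph_adj_B_cases {b : B} {i : Fin p} {y : RedVertex R B p}
    (h : (redGraph R B p Adj).Adj (Sum.inr (Sum.inl (b, i))) y) :
    (∃ j, y = Sum.inr (Sum.inl (b, j))) ∨ (∃ r, Adj r b ∧ y = Sum.inl (Sum.inl r)) ∨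
      ∃ x, y = Sum.inr (Sum.inr x) := by
  rcases y with (_ | _) | (_ | _) <;> grind [fromRel_adj, redRel]

variable (B p) in
def redCoverIncl (Rs : Finset R) : (Rs ⊕ Fin p) ⊕ (B × Fin p) → RedVertex R B p :=
  Sum.map (Sum.map Subtype.val id) Sum.inl

theorem redCoverIncl_injective (Rs : Finset R) : Injective (redCoverIncl B p Rs) :=
  (Subtype.val_injective.sumMap injective_id).sumMap Sum.inl_injective

variable (B p) in
/-- The set `Rs ∪ A ∪ ⋃ⱼ {b^j_1, …, b^j_p}`. -/
def redCover (Rs : Finset R) : Set (RedVertex R B p) :=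
  Set.range (redCoverIncl B p Rs)

theorem ncard_redCover [Fintype B] (Rs : Finset R) :
    (redCover B p Rs).ncard = Rs.card + p + Fintype.card B * p := by
  simp [redCover, Set.ncard_range_of_injective (redCoverIncl_injective Rs)]

theorem isVertexCover_redCover (Rs : Finset R) :
    IsVertexCover (redGraph R B p Adj) (redCover B p Rs) := by
  have hA : ∀ i, Sum.inl (Sum.inr i) ∈ redCover B p Rs := fun i => ⟨Sum.inl (Sum.inr i), rfl⟩
  have hB : ∀ bi, Sum.inr (Sum.inl bi) ∈ redCover B p Rs := fun bi => ⟨Sum.inr bi, rfl⟩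
  intro u v h
  rcases u with (_ | _) | (_ | _ | _) <;> rcases v with (_ | _) | (_ | _ | _) <;>
    simp_all [redRel]

theorem isEdgeConnected_induce_redCover {Rs : Finset R} {r₀ : R} (hr₀ : r₀ ∈ Rs)
    (hdom : ∀ b, ∃ r ∈ Rs, Adj r b) :
    ((redGraph R B p Adj).induce (redCover B p Rs)).IsEdgeConnected p := by
  obtain _ | n := p
  · exact .zero
  set G := (redGraph R B (n + 1) Adj).induce (redCover B (n + 1) Rs)
  set c := Set.rangeFactorization (redCoverIncl B (n + 1) Rs)
  have hc : Injective c := Set.rangeFactorization_injective.2 (redCoverIncl_injective Rs)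
  set hub := c (Sum.inl (Sum.inl ⟨r₀, hr₀⟩))
  have hA : ∀ i, G.IsEdgeReachable (n + 1) (c (Sum.inl (Sum.inr i))) hub := fun i =>
    SimpleGraph.Adj.isEdgeReachable_of_commonNeighbors
      (m := fun j : Fin n => c (Sum.inl (Sum.inr (i.succAbove j)))) (redGraph_adj_A_R i r₀)
      (hc.comp (Sum.inl_injective.comp (Sum.inr_injective.comp Fin.succAbove_right_injective)))
      (fun j => redGraph_adj_A_A (Fin.succAbove_ne i j).symm) (fun j => redGraph_adj_A_R _ r₀)
      (by simp)
  have hR : ∀ r : Rs, G.IsEdgeReachable (n + 1) (c (Sum.inl (Sum.inl r))) hub := fun r =>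
    isEdgeReachable_of_forall_adj (n := fun i => c (Sum.inl (Sum.inr i)))
      (hc.comp (Sum.inl_injective.comp Sum.inr_injective))
      (fun i => (redGraph_adj_A_R i r.1).symm) hA (by simp)
  have hB : ∀ bi, G.IsEdgeReachable (n + 1) (c (Sum.inr bi)) hub := by
    rintro ⟨b, i⟩
    obtain ⟨r, hr, hrb⟩ := hdom b
    have hbr : G.IsEdgeReachable (n + 1) (c (Sum.inr (b, i))) (c (Sum.inl (Sum.inl ⟨r, hr⟩))) :=
      SimpleGraph.Adj.isEdgeReachable_of_commonNeighbors
        (m := fun j : Fin n => c (Sum.inr (b, i.succAbove j))) (redGraph_adj_R_B hrb i).symm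
        (hc.comp (Sum.inr_injective.comp
          ((Prod.mk_right_injective b).comp Fin.succAbove_right_injective)))
        (fun j => redGraph_adj_B_B (Fin.succAbove_ne i j).symm)
        (fun j => (redGraph_adj_R_B hrb _).symm) (by simp)
    exact hbr.trans (hR ⟨r, hr⟩)
  have hall : ∀ x, G.IsEdgeReachable (n + 1) x hub := by
    rintro ⟨_, (r | i) | bi, rfl⟩
    exacts [hR r, hA i, hB bi]
  exact fun x y => (hall x).trans (hall y).symm

theorem pEdgeConnected_induce_redCover (hp : 2 ≤ p) {Rs : Finset R} {r₀ : R} (hr₀ : r₀ ∈ Rs)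
    (hdom : ∀ b, ∃ r ∈ Rs, Adj r b) :
    PEdgeConnected ((redGraph R B p Adj).induce (redCover B p Rs)) p := by
  have : Nontrivial (Fin p) := Fin.nontrivial_iff_two_le.2 hp
  refine pEdgeConnected_iff.2 ⟨?_, isEdgeConnected_induce_redCover hr₀ hdom⟩
  exact ((Set.rangeFactorization_injective.2 (redCoverIncl_injective Rs)).comp
    (Sum.inl_injective.comp Sum.inr_injective)).nontrivial

theorem redCover_subset {C : Set (RedVertex R B p)} {Rs : Finset R}
    (hR : ∀ r ∈ Rs, Sum.inl (Sum.inl r) ∈ C) (hA : ∀ i, Sum.inl (Sum.inr i) ∈ C)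
    (hB : ∀ bi, Sum.inr (Sum.inl bi) ∈ C) : redCover B p Rs ⊆ C := by
  rintro _ ⟨(⟨r, hr⟩ | i) | bi, rfl⟩
  exacts [hR r hr, hA i, hB bi]

theorem pendant_notMem_of_pEdgeConnected [Finite R] [Finite B] (hp : 2 ≤ p)
    {C : Set (RedVertex R B p)} (hC : PEdgeConnected ((redGraph R B p Adj).induce C) p)
    (x : Fin p ⊕ B × Fin p) : Sum.inr (Sum.inr x) ∉ C := fun hx =>
  have ⟨_, hconn⟩ := pEdgeConnected_iff.1 hC
  hconn.not_subsingleton_neighborSet hp ⟨_, hx⟩ fun _ hy _ hz =>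
    Subtype.val_injective
      ((eq_of_redGraph_adj_pendant hy).trans (eq_of_redGraph_adj_pendant hz).symm)

theorem exists_adj_mem_of_preconnected_induce {C : Set (RedVertex R B p)}
    (hC : ((redGraph R B p Adj).induce C).Preconnected) (hpendant : ∀ x, Sum.inr (Sum.inr x) ∉ C)
    {i : Fin p} (hA : Sum.inl (Sum.inr i) ∈ C) {b : B} {j : Fin p}
    (hb : Sum.inr (Sum.inl (b, j)) ∈ C) : ∃ r, Sum.inl (Sum.inl r) ∈ C ∧ Adj r b := by
  obtain ⟨w⟩ := hC ⟨_, hb⟩ ⟨_, hA⟩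
  obtain ⟨d, -, ⟨j', hj'⟩, hout⟩ :=
    w.exists_boundary_dart {x | ∃ j, x.1 = Sum.inr (Sum.inl (b, j))} ⟨j, rfl⟩ (by simp)
  have hadj : (redGraph R B p Adj).Adj (Sum.inr (Sum.inl (b, j'))) d.snd.1 := hj' ▸ d.adj
  rcases redGraph_adj_B_cases hadj with ⟨j'', h⟩ | ⟨r, hrb, h⟩ | ⟨x, h⟩
  · exact absurd ⟨j'', h⟩ hout
  · exact ⟨r, h ▸ d.snd.2, hrb⟩
  · exact absurd (h ▸ d.snd.2) (hpendant x)

end Reduction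

theorem stmt17_general {R B : Type*} [Fintype R] [Fintype B]
    (p t k : ℕ) (hp : 2 ≤ p) (Adj : R → B → Prop)
    (ht : Fintype.card B = t) (htp : p ≤ t) :
    (∃ Rs : Finset R, Rs.card ≤ k ∧ ∀ b : B, ∃ r ∈ Rs, Adj r b) ↔
      (∃ C : Set ((R ⊕ Fin p) ⊕ ((B × Fin p) ⊕ (Fin p ⊕ B × Fin p))),
        IsVertexCover (SimpleGraph.fromRel (redRel R B p Adj)) C ∧
          C.ncard ≤ k + p * (t + 1) ∧
          PEdgeConnected ((SimpleGraph.fromRel (redRel R B p Adj)).induce C) p) := by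
  classical
  have hcard (Rs : Finset R) : (redCover B p Rs).ncard = Rs.card + p * (t + 1) := by
    rw [ncard_redCover, ht]
    ring
  constructor
  · rintro ⟨Rs, hRs, hdom⟩
    have : Nonempty B := Fintype.card_pos_iff.1 (by omega)
    obtain ⟨r₀, hr₀, -⟩ := hdom (Classical.arbitrary B)
    exact ⟨redCover B p Rs, isVertexCover_redCover Rs, by rw [hcard]; omega,
      pEdgeConnected_induce_redCover hp hr₀ hdom⟩
  · rintro ⟨C, hC, hCcard, hconn⟩
    have hpendant := pendant_notMem_of_pEdgeConnected hp hconn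
    have hA i := (hC (redGraph_adj_A_pendant i)).resolve_right (hpendant _)
    have hB bi := (hC (redGraph_adj_B_pendant bi)).resolve_right (hpendant _)
    let Rs := Finset.univ.filter fun r => Sum.inl (Sum.inl r) ∈ C
    refine ⟨Rs, ?_, fun b => ?_⟩
    · have := Set.ncard_le_ncard
        (redCover_subset (Rs := Rs) (fun r hr => (Finset.mem_filter.1 hr).2) hA hB) C.toFinite
      rw [hcard] at this
      omega
    · obtain ⟨r, hr, hrb⟩ := exists_adj_mem_of_preconnected_induce
        ((pEdgeConnected_iff.1 hconn).2.preconnected (by omega)) hpendant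
        (hA ⟨0, by omega⟩) (hB (b, ⟨0, by omega⟩))
      exact ⟨r, Finset.mem_filter.2 ⟨Finset.mem_univ r, hr⟩, hrb⟩

/-- Correctness of the reduction from Red-Blue Dominating Set to
`p`-Edge-Connected Vertex Cover: `G` has a set `R* ⊆ R` of size at most `k`
dominating all of `B` iff `H` has a vertex cover of size at most `k + p(t+1)`
inducing a `p`-edge-connected subgraph. -/
theorem stmt17 {R B : Type*} [Fintype R] [Fintype B] [DecidableEq R]
    [DecidableEq B] (p t k : ℕ) (hp : 2 ≤ p) (Adj : R → B → Prop)
    (hR : ∀ r : R, ∃ b : B, Adj r b) (hB : ∀ b : B, ∃ r : R, Adj r b)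
    (ht : Fintype.card B = t) (htp : p ≤ t) (hk : p ≤ k) :
    (∃ Rs : Finset R, Rs.card ≤ k ∧ ∀ b : B, ∃ r ∈ Rs, Adj r b) ↔
      (∃ C : Set ((R ⊕ Fin p) ⊕ ((B × Fin p) ⊕ (Fin p ⊕ B × Fin p))),
        IsVertexCover (SimpleGraph.fromRel (redRel R B p Adj)) C ∧
          C.ncard ≤ k + p * (t + 1) ∧
          PEdgeConnected ((SimpleGraph.fromRel (redRel R B p Adj)).induce C) p) :=
  stmt17_general p t k hp Adj ht htp
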